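/- For every n ≥ 2, the signed generating function of the type D odd length satisfies ∑_{σ ∈ D_n} (−1)^{ℓ_D(σ)} x^{L_D(σ)} = (∏_{i=2}^{n} (1 + (−1)^{i−1} x^{⌊i/2⌋}))², where L_D(σ) = oinv(σ) + onsp(σ). Moreover the type A signed generating function ∑_{σ ∈ S_n} (−1)^{inv(σ)} x^{oinv(σ)} equals ∏_{i=2}^{n}(1 + (−1)^{i−1} x^{⌊i/2⌋}). -/
import Mathlib


open Finset

/-- The hyperoctahedral group `B_n` of signed permutations, encoded as a pair
consisting of the underlying permutation of positions and the signs of the entries. -/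
abbrev BG (n : ℕ) := Equiv.Perm (Fin n) × (Fin n → Bool)

/-- The window notation value `σ(i)` (1-based values, 0-based positions). -/
def wval {n : ℕ} (σ : BG n) (i : Fin n) : ℤ :=
  (if σ.2 i then -1 else 1) * ((σ.1 i : ℤ) + 1)

def pairsF (n : ℕ) : Finset (Fin n × Fin n) := univ.filter fun p => p.1 < p.2

/-- number of inversions -/
def invB {n : ℕ} (σ : BG n) : ℕ :=
  ((pairsF n).filter fun p => wval σ p.2 < wval σ p.1).card

/-- number of odd inversions -/
def oinvB {n : ℕ} (σ : BG n) : ℕ :=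
  ((pairsF n).filter fun p => wval σ p.2 < wval σ p.1 ∧ (p.2.val - p.1.val) % 2 = 1).card

/-- number of even inversions -/
def einvB {n : ℕ} (σ : BG n) : ℕ :=
  ((pairsF n).filter fun p => wval σ p.2 < wval σ p.1 ∧ (p.2.val - p.1.val) % 2 = 0).card

/-- number of negative sum pairs -/
def nspB {n : ℕ} (σ : BG n) : ℕ :=
  ((pairsF n).filter fun p => wval σ p.1 + wval σ p.2 < 0).card

/-- number of odd negative sum pairs -/
def onspB {n : ℕ} (σ : BG n) : ℕ :=
  ((pairsF n).filter fun p => wval σ p.1 + wval σ p.2 < 0 ∧ (p.2.val - p.1.val) % 2 = 1).card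

/-- number of even negative sum pairs -/
def enspB {n : ℕ} (σ : BG n) : ℕ :=
  ((pairsF n).filter fun p => wval σ p.1 + wval σ p.2 < 0 ∧ (p.2.val - p.1.val) % 2 = 0).card

/-- number of negative entries -/
def nnegB {n : ℕ} (σ : BG n) : ℕ :=
  (univ.filter fun i : Fin n => wval σ i < 0).card

/-- number of negative entries in odd (1-based) positions -/
def onegB {n : ℕ} (σ : BG n) : ℕ :=
  (univ.filter fun i : Fin n => wval σ i < 0 ∧ (i.val + 1) % 2 = 1).card

/-- number of negative entries in even (1-based) positions -/
def enegB {n : ℕ} (σ : BG n) : ℕ :=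
  (univ.filter fun i : Fin n => wval σ i < 0 ∧ (i.val + 1) % 2 = 0).card

/-- Coxeter length of type B -/
def lenB {n : ℕ} (σ : BG n) : ℕ := invB σ + nnegB σ + nspB σ

/-- Coxeter length of type D -/
def lenD {n : ℕ} (σ : BG n) : ℕ := invB σ + nspB σ

/-- inversion number of a permutation -/
def invA {n : ℕ} (σ : Equiv.Perm (Fin n)) : ℕ :=
  ((pairsF n).filter fun p => σ p.2 < σ p.1).card

/-- number of odd inversions of a permutation -/
def oinvA {n : ℕ} (σ : Equiv.Perm (Fin n)) : ℕ :=
  ((pairsF n).filter fun p => σ p.2 < σ p.1 ∧ (p.2.val - p.1.val) % 2 = 1).card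

/-- the odd length of type `D` -/
def LD {n : ℕ} (σ : BG n) : ℕ := oinvB σ + onspB σ

open Finset Equiv Polynomial

namespace SGF

abbrev PZ := Polynomial ℤ

noncomputable def Apoly (m : ℕ) : PZ := ∏ i ∈ Icc 2 m, (1 + (-1 : PZ) ^ (i - 1) * X ^ (i / 2))

/-- number of non-inversions below `j` at odd distance -/
def nbo {m : ℕ} (π : Equiv.Perm (Fin m)) (j : Fin m) : ℕ :=
  (univ.filter fun i : Fin m => i < j ∧ ((j : ℕ) - (i : ℕ)) % 2 = 1 ∧ π i < π j).card

noncomputable def Aterm {m : ℕ} (π : Equiv.Perm (Fin m)) : PZ :=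
  (-1) ^ invA π * X ^ oinvA π

noncomputable def Wterm {m : ℕ} (π : Equiv.Perm (Fin m)) : PZ :=
  Aterm π * ∏ j, (1 + X ^ (2 * nbo π j))

def chiF {m : ℕ} (π : Equiv.Perm (Fin m)) : Fin m → Bool :=
  fun u => decide (((π.symm u : ℕ) + m) % 2 = 1)

def altb (m : ℕ) (b : Bool) : Fin m → Bool := fun v => xor b (decide ((v : ℕ) % 2 = 1))

noncomputable def Csum (m : ℕ) (χ : Fin m → Bool) : PZ :=
  ∑ π ∈ univ.filter fun π : Equiv.Perm (Fin m) => chiF π = χ, Aterm π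

noncomputable def Wsum (m : ℕ) (χ : Fin m → Bool) : PZ :=
  ∑ π ∈ univ.filter fun π : Equiv.Perm (Fin m) => chiF π = χ, Wterm π

lemma invA_eq_sum {m : ℕ} (π : Equiv.Perm (Fin m)) :
    invA π = ∑ z : Fin m × Fin m, if z.1 < z.2 ∧ π z.2 < π z.1 then 1 else 0 := by
  rw [invA, pairsF, filter_filter, card_filter]

lemma oinvA_eq_sum {m : ℕ} (π : Equiv.Perm (Fin m)) :
    oinvA π = ∑ z : Fin m × Fin m,
      if z.1 < z.2 ∧ (π z.2 < π z.1 ∧ ((z.2 : ℕ) - (z.1 : ℕ)) % 2 = 1) then 1 else 0 := by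
  rw [oinvA, pairsF, filter_filter, card_filter]

lemma invA_eq_dsum {m : ℕ} (π : Equiv.Perm (Fin m)) :
    invA π = ∑ i : Fin m, ∑ j : Fin m, if i < j ∧ π j < π i then 1 else 0 := by
  rw [invA_eq_sum, Fintype.sum_prod_type]

lemma oinvA_eq_dsum {m : ℕ} (π : Equiv.Perm (Fin m)) :
    oinvA π = ∑ i : Fin m, ∑ j : Fin m,
      if i < j ∧ (π j < π i ∧ ((j : ℕ) - (i : ℕ)) % 2 = 1) then 1 else 0 := by
  rw [oinvA_eq_sum, Fintype.sum_prod_type]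

end SGF

namespace SGF

open Finset Equiv Polynomial

lemma neg_one_pow_eq_of_odd_add {a b : ℕ} (h : Odd (a + b)) : (-1 : PZ) ^ a = -(-1) ^ b := by
  have hb : (-1 : PZ) ^ b * (-1) ^ b = 1 := by
    rw [← pow_add]
    have : b + b = 2 * b := by omega
    rw [this, pow_mul]
    norm_num
  have hab : (-1 : PZ) ^ a * (-1) ^ b = -1 := by
    rw [← pow_add]; exact Odd.neg_one_pow h
  calc (-1 : PZ) ^ a = (-1) ^ a * ((-1) ^ b * (-1) ^ b) := by rw [hb, mul_one]
    _ = ((-1) ^ a * (-1) ^ b) * (-1) ^ b := by ring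
    _ = -1 * (-1) ^ b := by rw [hab]
    _ = -(-1) ^ b := by ring

section Swap

variable {m : ℕ} {v w : Fin m} (hw : (w : ℕ) = (v : ℕ) + 1)

include hw

lemma swap_cmp_right {b : Fin m} (hbv : b ≠ v) (hbw : b ≠ w) (a : Fin m) :
    (b < Equiv.swap v w a ↔ b < a) ∧ (Equiv.swap v w a < b ↔ a < b) := by
  have hbv' : (b : ℕ) ≠ (v : ℕ) := fun h => hbv (Fin.val_injective h)
  have hbw' : (b : ℕ) ≠ (w : ℕ) := fun h => hbw (Fin.val_injective h)
  rcases eq_or_ne a v with rfl | hav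
  · rw [Equiv.swap_apply_left]
    constructor <;> simp only [Fin.lt_def] <;> omega
  rcases eq_or_ne a w with rfl | haw
  · rw [Equiv.swap_apply_right]
    constructor <;> simp only [Fin.lt_def] <;> omega
  · rw [Equiv.swap_apply_of_ne_of_ne hav haw]
    exact ⟨Iff.rfl, Iff.rfl⟩

variable (π : Equiv.Perm (Fin m))

lemma swap_cmp_notboth {i j : Fin m}
    (hnb : ¬((π i = v ∨ π i = w) ∧ (π j = v ∨ π j = w))) :
    ((π.trans (Equiv.swap v w)) j < (π.trans (Equiv.swap v w)) i ↔ π j < π i) ∧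
    ((π.trans (Equiv.swap v w)) i < (π.trans (Equiv.swap v w)) j ↔ π i < π j) := by
  simp only [Equiv.trans_apply]
  by_cases hi : π i = v ∨ π i = w
  · have hj : π j ≠ v ∧ π j ≠ w := by
      constructor <;> intro h <;> exact hnb ⟨hi, by tauto⟩
    rw [Equiv.swap_apply_of_ne_of_ne hj.1 hj.2]
    exact swap_cmp_right hw hj.1 hj.2 (π i)
  · push_neg at hi
    rw [Equiv.swap_apply_of_ne_of_ne hi.1 hi.2]
    by_cases hj : π j = v ∨ π j = w
    · exact ⟨(swap_cmp_right hw hi.1 hi.2 (π j)).2, (swap_cmp_right hw hi.1 hi.2 (π j)).1⟩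
    · push_neg at hj
      rw [Equiv.swap_apply_of_ne_of_ne hj.1 hj.2]
      exact ⟨Iff.rfl, Iff.rfl⟩

variable {p q : Fin m} (hp : π p = v) (hq : π q = w)

include hp hq

lemma swap_pair_cmp (hpar : (p : ℕ) % 2 = (q : ℕ) % 2)
    {i j : Fin m} (hij : i < j) (hodd : ((j : ℕ) - (i : ℕ)) % 2 = 1) :
    ((π.trans (Equiv.swap v w)) j < (π.trans (Equiv.swap v w)) i ↔ π j < π i) ∧
    ((π.trans (Equiv.swap v w)) i < (π.trans (Equiv.swap v w)) j ↔ π i < π j) := by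
  refine swap_cmp_notboth hw π ?_
  rintro ⟨hi, hj⟩
  have hip : i = p ∨ i = q := by
    rcases hi with h | h
    · exact Or.inl (π.injective (by rw [h, hp]))
    · exact Or.inr (π.injective (by rw [h, hq]))
  have hjp : j = p ∨ j = q := by
    rcases hj with h | h
    · exact Or.inl (π.injective (by rw [h, hp]))
    · exact Or.inr (π.injective (by rw [h, hq]))
  have hij' : (i : ℕ) < (j : ℕ) := hij
  rcases hip with rfl | rfl <;> rcases hjp with h | h <;>
    · have := congrArg Fin.val h
      omega

lemma oinvA_swap (hpar : (p : ℕ) % 2 = (q : ℕ) % 2) :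
    oinvA (π.trans (Equiv.swap v w)) = oinvA π := by
  rw [oinvA_eq_sum, oinvA_eq_sum]
  refine Finset.sum_congr rfl fun z _ => ?_
  by_cases h1 : z.1 < z.2
  · by_cases h2 : ((z.2 : ℕ) - (z.1 : ℕ)) % 2 = 1
    · have hc := (swap_pair_cmp hw π hp hq hpar h1 h2).1
      simp only [hc]
    · simp only [h2, and_false, if_false]
  · simp only [h1, false_and, if_false]

lemma nbo_swap (hpar : (p : ℕ) % 2 = (q : ℕ) % 2) (j : Fin m) :
    nbo (π.trans (Equiv.swap v w)) j = nbo π j := by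
  unfold nbo
  rw [card_filter, card_filter]
  refine Finset.sum_congr rfl fun i _ => ?_
  by_cases h1 : i < j
  · by_cases h2 : ((j : ℕ) - (i : ℕ)) % 2 = 1
    · have hc := (swap_pair_cmp hw π hp hq hpar h1 h2).2
      simp only [hc]
    · simp only [h2, false_and, and_false, if_false]
  · simp only [h1, false_and, if_false]

lemma invA_swap_odd : Odd (invA (π.trans (Equiv.swap v w)) + invA π) := by
  have hvw : v ≠ w := by
    intro h; have := congrArg Fin.val h; omega
  have hpq : p ≠ q := by
    intro h; rw [← hp, ← hq, h] at hvw; exact hvw rfl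
  have hvltw : v < w := by rw [Fin.lt_def]; omega
  have main : ∀ z : Fin m × Fin m, z ≠ (p, q) → z ≠ (q, p) →
      (if z.1 < z.2 ∧ (π.trans (Equiv.swap v w)) z.2 < (π.trans (Equiv.swap v w)) z.1 then 1 else 0) =
      (if z.1 < z.2 ∧ π z.2 < π z.1 then (1:ℕ) else 0) := by
    intro z hz1 hz2
    by_cases h1 : z.1 < z.2
    · have hnb : ¬((π z.1 = v ∨ π z.1 = w) ∧ (π z.2 = v ∨ π z.2 = w)) := by
        rintro ⟨hi, hj⟩
        have hip : z.1 = p ∨ z.1 = q := by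
          rcases hi with h | h
          · exact Or.inl (π.injective (by rw [h, hp]))
          · exact Or.inr (π.injective (by rw [h, hq]))
        have hjp : z.2 = p ∨ z.2 = q := by
          rcases hj with h | h
          · exact Or.inl (π.injective (by rw [h, hp]))
          · exact Or.inr (π.injective (by rw [h, hq]))
        have hne : z.1 ≠ z.2 := ne_of_lt h1
        rcases hip with h3 | h3 <;> rcases hjp with h4 | h4
        · exact hne (h3.trans h4.symm)
        · exact hz1 (by rw [← h3, ← h4])
        · exact hz2 (by rw [← h3, ← h4])
        · exact hne (h3.trans h4.symm)
      have hc := (swap_cmp_notboth hw π hnb).1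
      simp only [hc]
    · simp only [h1, false_and, if_false]
  -- now split at the distinguished pair
  rcases hpq.lt_or_gt with hpq' | hpq'
  · have hmem : ((p, q) : Fin m × Fin m) ∈ (univ : Finset (Fin m × Fin m)) := mem_univ _
    rw [invA_eq_sum, invA_eq_sum,
      Finset.sum_eq_sum_sdiff_singleton_add hmem, Finset.sum_eq_sum_sdiff_singleton_add hmem]
    have hS : ∑ z ∈ univ \ {(p, q)},
        (if z.1 < z.2 ∧ (π.trans (Equiv.swap v w)) z.2 < (π.trans (Equiv.swap v w)) z.1 then 1 else 0) =
        ∑ z ∈ univ \ {(p, q)}, (if z.1 < z.2 ∧ π z.2 < π z.1 then (1:ℕ) else 0) := by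
      refine Finset.sum_congr rfl fun z hz => ?_
      have hz1 : z ≠ (p, q) := by
        simp only [mem_sdiff, mem_singleton] at hz; exact hz.2
      by_cases hz2 : z = (q, p)
      · subst hz2
        have : ¬((q, p).1 < (q, p).2) := by simp only []; exact not_lt.mpr (le_of_lt hpq')
        simp only [this, false_and, if_false]
      · exact main z hz1 hz2
    rw [hS]
    have hf : (if (p, q).1 < (p, q).2 ∧ π (p, q).2 < π (p, q).1 then (1:ℕ) else 0) = 0 := by
      have : ¬(π q < π p) := by rw [hp, hq]; exact not_lt.mpr (le_of_lt hvltw)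
      simp only [this, and_false, if_false]
    have hf' : (if (p, q).1 < (p, q).2 ∧
        (π.trans (Equiv.swap v w)) (p, q).2 < (π.trans (Equiv.swap v w)) (p, q).1 then (1:ℕ) else 0) = 1 := by
      have e1 : (π.trans (Equiv.swap v w)) q = v := by
        simp only [Equiv.trans_apply, hq, Equiv.swap_apply_right]
      have e2 : (π.trans (Equiv.swap v w)) p = w := by
        simp only [Equiv.trans_apply, hp, Equiv.swap_apply_left]
      simp only [e1, e2, hpq', hvltw, and_true, true_and, if_pos, if_true]
    rw [hf, hf']
    rw [Nat.odd_iff]; omega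
  · have hmem : ((q, p) : Fin m × Fin m) ∈ (univ : Finset (Fin m × Fin m)) := mem_univ _
    rw [invA_eq_sum, invA_eq_sum,
      Finset.sum_eq_sum_sdiff_singleton_add hmem, Finset.sum_eq_sum_sdiff_singleton_add hmem]
    have hS : ∑ z ∈ univ \ {(q, p)},
        (if z.1 < z.2 ∧ (π.trans (Equiv.swap v w)) z.2 < (π.trans (Equiv.swap v w)) z.1 then 1 else 0) =
        ∑ z ∈ univ \ {(q, p)}, (if z.1 < z.2 ∧ π z.2 < π z.1 then (1:ℕ) else 0) := by
      refine Finset.sum_congr rfl fun z hz => ?_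
      have hz2 : z ≠ (q, p) := by
        simp only [mem_sdiff, mem_singleton] at hz; exact hz.2
      by_cases hz1 : z = (p, q)
      · subst hz1
        have : ¬((p, q).1 < (p, q).2) := by simp only []; exact not_lt.mpr (le_of_lt hpq')
        simp only [this, false_and, if_false]
      · exact main z hz1 hz2
    rw [hS]
    have hf : (if (q, p).1 < (q, p).2 ∧ π (q, p).2 < π (q, p).1 then (1:ℕ) else 0) = 1 := by
      have : π p < π q := by rw [hp, hq]; exact hvltw
      simp only [this, hpq', and_true, if_pos, true_and, if_true]
    have hf' : (if (q, p).1 < (q, p).2 ∧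
        (π.trans (Equiv.swap v w)) (q, p).2 < (π.trans (Equiv.swap v w)) (q, p).1 then (1:ℕ) else 0) = 0 := by
      have e1 : (π.trans (Equiv.swap v w)) q = v := by
        simp only [Equiv.trans_apply, hq, Equiv.swap_apply_right]
      have e2 : (π.trans (Equiv.swap v w)) p = w := by
        simp only [Equiv.trans_apply, hp, Equiv.swap_apply_left]
      have : ¬((π.trans (Equiv.swap v w)) p < (π.trans (Equiv.swap v w)) q) := by
        rw [e1, e2]; exact not_lt.mpr (le_of_lt hvltw)
      simp only [this, and_false, if_false]
    rw [hf, hf']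
    rw [Nat.odd_iff]; omega

end Swap

end SGF

namespace SGF

open Finset Equiv Polynomial

section Vanish

variable {m : ℕ}

lemma chiF_trans_swap (π : Equiv.Perm (Fin m)) (v w : Fin m) (u : Fin m) :
    chiF (π.trans (Equiv.swap v w)) u = chiF π (Equiv.swap v w u) := by
  unfold chiF
  rw [Equiv.symm_trans_apply, Equiv.symm_swap]

lemma chiF_swap (π : Equiv.Perm (Fin m)) {v w : Fin m} (χ : Fin m → Bool)
    (hmem : chiF π = χ) (hχ : χ v = χ w) :
    chiF (π.trans (Equiv.swap v w)) = χ := by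
  funext u
  rw [chiF_trans_swap, hmem]
  rcases eq_or_ne u v with rfl | huv
  · rw [Equiv.swap_apply_left, hχ]
  rcases eq_or_ne u w with rfl | huw
  · rw [Equiv.swap_apply_right, hχ]
  · rw [Equiv.swap_apply_of_ne_of_ne huv huw]

lemma vanish_gen (χ : Fin m → Bool) {v w : Fin m} (hw : (w : ℕ) = (v : ℕ) + 1)
    (hχ : χ v = χ w) (F : Equiv.Perm (Fin m) → PZ)
    (hF : ∀ π, chiF π = χ → F (π.trans (Equiv.swap v w)) = -F π) :
    ∑ π ∈ univ.filter fun π : Equiv.Perm (Fin m) => chiF π = χ, F π = 0 := by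
  have hvw : v ≠ w := fun h => by have := congrArg Fin.val h; omega
  refine Finset.sum_involution (fun π _ => π.trans (Equiv.swap v w)) ?_ ?_ ?_ ?_
  · intro π hπ
    have hmem : chiF π = χ := (mem_filter.mp hπ).2
    rw [hF π hmem]; ring
  · intro π hπ _
    intro h
    have h2 := DFunLike.congr_fun h (π.symm v)
    simp only [Equiv.trans_apply, Equiv.apply_symm_apply, Equiv.swap_apply_left] at h2
    exact hvw h2.symm
  · intro π hπ
    exact mem_filter.mpr ⟨mem_univ _, chiF_swap π χ (mem_filter.mp hπ).2 hχ⟩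
  · intro π hπ
    ext i
    simp only [Equiv.trans_apply, Equiv.swap_apply_self]

lemma vanish (χ : Fin m → Bool) {v w : Fin m} (hw : (w : ℕ) = (v : ℕ) + 1)
    (hχ : χ v = χ w) : Csum m χ = 0 ∧ Wsum m χ = 0 := by
  have key : ∀ π : Equiv.Perm (Fin m), chiF π = χ →
      ((-1 : PZ) ^ invA (π.trans (Equiv.swap v w)) = -(-1) ^ invA π) ∧
      oinvA (π.trans (Equiv.swap v w)) = oinvA π ∧
      ∀ j, nbo (π.trans (Equiv.swap v w)) j = nbo π j := by
    intro π hmem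
    have hp : π (π.symm v) = v := π.apply_symm_apply v
    have hq : π (π.symm w) = w := π.apply_symm_apply w
    have h1 : chiF π v = chiF π w := by rw [hmem]; exact hχ
    unfold chiF at h1
    have h2 := decide_eq_decide.mp h1
    have hpar : ((π.symm v : ℕ)) % 2 = ((π.symm w : ℕ)) % 2 := by omega
    refine ⟨neg_one_pow_eq_of_odd_add (invA_swap_odd hw π hp hq), ?_, ?_⟩
    · exact oinvA_swap hw π hp hq hpar
    · exact fun j => nbo_swap hw π hp hq hpar j
  constructor
  · refine vanish_gen χ hw hχ Aterm fun π hmem => ?_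
    obtain ⟨k1, k2, _⟩ := key π hmem
    unfold Aterm
    rw [k1, k2]; ring
  · refine vanish_gen χ hw hχ Wterm fun π hmem => ?_
    obtain ⟨k1, k2, k3⟩ := key π hmem
    unfold Wterm Aterm
    rw [k1, k2]
    have : ∀ j, (1 + (X : PZ) ^ (2 * nbo (π.trans (Equiv.swap v w)) j)) = 1 + X ^ (2 * nbo π j) :=
      fun j => by rw [k3 j]
    rw [Finset.prod_congr rfl fun j _ => this j]
    ring

lemma altb_true_ne_false (hm : 0 < m) : altb m true ≠ altb m false := by
  intro h
  have h2 := congrFun h ⟨0, hm⟩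
  simp [altb] at h2

lemma exists_adj_of_ne_alt (χ : Fin m → Bool) (hT : χ ≠ altb m true) (hF : χ ≠ altb m false) :
    ∃ v w : Fin m, (w : ℕ) = (v : ℕ) + 1 ∧ χ v = χ w := by
  by_contra hcon
  push_neg at hcon
  rcases Nat.eq_zero_or_pos m with hm | hm
  · subst hm
    exact hT (funext fun v => v.elim0)
  have h0 : ∀ i, ∀ hi : i < m, χ ⟨i, hi⟩ = xor (χ ⟨0, hm⟩) (decide (i % 2 = 1)) := by
    intro i
    induction i with
    | zero => intro hi; simp
    | succ k ih =>
      intro hi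
      have hk : k < m := by omega
      have hne := hcon ⟨k, hk⟩ ⟨k + 1, hi⟩ rfl
      have hstep : χ ⟨k + 1, hi⟩ = !(χ ⟨k, hk⟩) := Bool.eq_not_iff.mpr (Ne.symm hne)
      rw [hstep, ih hk]
      rcases Nat.mod_two_eq_zero_or_one k with hk2 | hk2
      · have d1 : decide (k % 2 = 1) = false := by simp [hk2]
        have d2 : decide ((k + 1) % 2 = 1) = true := by simp; omega
        rw [d1, d2]
        cases χ ⟨0, hm⟩ <;> rfl
      · have d1 : decide (k % 2 = 1) = true := by simp [hk2]
        have d2 : decide ((k + 1) % 2 = 1) = false := by simp; omega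
        rw [d1, d2]
        cases χ ⟨0, hm⟩ <;> rfl
  have hchi : χ = altb m (χ ⟨0, hm⟩) := by
    funext v
    have := h0 v.val v.isLt
    simpa [altb, Fin.eta] using this
  rcases hb : χ ⟨0, hm⟩ with _ | _
  · rw [hb] at hchi; exact hF hchi
  · rw [hb] at hchi; exact hT hchi

lemma csum_wsum_ne_alt (χ : Fin m → Bool) (hT : χ ≠ altb m true) (hF : χ ≠ altb m false) :
    Csum m χ = 0 ∧ Wsum m χ = 0 := by
  obtain ⟨v, w, hw, hχ⟩ := exists_adj_of_ne_alt χ hT hF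
  exact vanish χ hw hχ

end Vanish

end SGF

namespace SGF

open Finset Equiv Polynomial

section Ins

variable {m : ℕ}

def ins (c : Fin (m + 1)) (τ : Equiv.Perm (Fin m)) : Equiv.Perm (Fin (m + 1)) :=
  finSuccEquivLast.trans ((Equiv.optionCongr τ).trans (finSuccEquiv' c).symm)

@[simp] lemma ins_apply_castSucc (c : Fin (m + 1)) (τ : Equiv.Perm (Fin m)) (i : Fin m) :
    ins c τ (Fin.castSucc i) = c.succAbove (τ i) := by
  simp [ins, finSuccEquivLast_castSucc, Equiv.optionCongr_apply, finSuccEquiv'_symm_some]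

@[simp] lemma ins_apply_last (c : Fin (m + 1)) (τ : Equiv.Perm (Fin m)) :
    ins c τ (Fin.last m) = c := by
  simp [ins, finSuccEquivLast_last, Equiv.optionCongr_apply]

lemma succAbove_val (c : Fin (m + 1)) (u : Fin m) :
    ((c.succAbove u) : ℕ) = if (u : ℕ) < (c : ℕ) then (u : ℕ) else (u : ℕ) + 1 := by
  rw [Fin.succAbove]
  split_ifs with h1 h2 h3
  · rfl
  · exact absurd (Fin.lt_def.mp h1) h2
  · exact absurd ((Fin.lt_def (a := Fin.castSucc u)).mpr h3) h1
  · exact Fin.val_succ u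

lemma succAbove_lt_self (c : Fin (m + 1)) (u : Fin m) :
    c.succAbove u < c ↔ (u : ℕ) < (c : ℕ) := by
  rw [Fin.lt_def, succAbove_val]
  split_ifs with h <;> omega

lemma self_lt_succAbove (c : Fin (m + 1)) (u : Fin m) :
    c < c.succAbove u ↔ (c : ℕ) ≤ (u : ℕ) := by
  rw [Fin.lt_def, succAbove_val]
  split_ifs with h <;> omega

lemma ins_injective :
    Function.Injective (fun ct : Fin (m + 1) × Equiv.Perm (Fin m) => ins ct.1 ct.2) := by
  rintro ⟨c, τ⟩ ⟨c', τ'⟩ h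
  simp only at h
  have hc : c = c' := by
    have h2 := DFunLike.congr_fun h (Fin.last m)
    simpa using h2
  subst hc
  have hτ : τ = τ' := by
    ext i
    have h2 := DFunLike.congr_fun h (Fin.castSucc i)
    rw [ins_apply_castSucc, ins_apply_castSucc] at h2
    have := Fin.succAbove_right_injective (p := c) h2
    exact congrArg Fin.val this
  subst hτ
  rfl

lemma ins_bijective :
    Function.Bijective (fun ct : Fin (m + 1) × Equiv.Perm (Fin m) => ins ct.1 ct.2) := by
  rw [Fintype.bijective_iff_injective_and_card]
  refine ⟨ins_injective, ?_⟩
  simp [Fintype.card_perm, Nat.factorial_succ]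

lemma sum_ins (F : Equiv.Perm (Fin (m + 1)) → PZ) :
    ∑ π : Equiv.Perm (Fin (m + 1)), F π = ∑ c : Fin (m + 1), ∑ τ : Equiv.Perm (Fin m), F (ins c τ) := by
  calc ∑ π : Equiv.Perm (Fin (m + 1)), F π
      = ∑ ct : Fin (m + 1) × Equiv.Perm (Fin m), F (ins ct.1 ct.2) :=
        (Fintype.sum_bijective _ ins_bijective _ _ fun ct => rfl).symm
    _ = _ := Fintype.sum_prod_type _

def mcnt (c : Fin (m + 1)) (τ : Equiv.Perm (Fin m)) : ℕ :=
  (univ.filter fun i : Fin m => (c : ℕ) ≤ (τ i : ℕ)).card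

def crossC (c : Fin (m + 1)) (τ : Equiv.Perm (Fin m)) : ℕ :=
  (univ.filter fun i : Fin m => ((m : ℕ) - (i : ℕ)) % 2 = 1 ∧ (c : ℕ) ≤ (τ i : ℕ)).card

def ncrossC (c : Fin (m + 1)) (τ : Equiv.Perm (Fin m)) : ℕ :=
  (univ.filter fun i : Fin m => ((m : ℕ) - (i : ℕ)) % 2 = 1 ∧ (τ i : ℕ) < (c : ℕ)).card

lemma double_sum_expand (G : Fin (m + 1) → Fin (m + 1) → ℕ) :
    (∑ i, ∑ j, G i j) = (∑ i : Fin m, ∑ j : Fin m, G i.castSucc j.castSucc)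
      + (∑ i : Fin m, G i.castSucc (Fin.last m))
      + ((∑ j : Fin m, G (Fin.last m) j.castSucc) + G (Fin.last m) (Fin.last m)) := by
  calc ∑ i : Fin (m + 1), ∑ j, G i j
      = (∑ i : Fin m, ∑ j, G i.castSucc j) + ∑ j, G (Fin.last m) j :=
        Fin.sum_univ_castSucc _
    _ = (∑ i : Fin m, (∑ j : Fin m, G i.castSucc j.castSucc + G i.castSucc (Fin.last m)))
        + ((∑ j : Fin m, G (Fin.last m) j.castSucc) + G (Fin.last m) (Fin.last m)) := by
        rw [Fin.sum_univ_castSucc (f := fun j => G (Fin.last m) j)]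
        congr 1
        exact Finset.sum_congr rfl fun i _ => Fin.sum_univ_castSucc _
    _ = _ := by rw [Finset.sum_add_distrib]

lemma not_last_lt_castSucc (j : Fin m) : ¬(Fin.last m < Fin.castSucc j) := by
  rw [Fin.lt_def]
  simp only [Fin.val_last, Fin.coe_castSucc]
  omega

lemma invA_ins (c : Fin (m + 1)) (τ : Equiv.Perm (Fin m)) :
    invA (ins c τ) = invA τ + mcnt c τ := by
  rw [invA_eq_dsum, double_sum_expand]
  have b11 : (∑ i : Fin m, ∑ j : Fin m,
      if (Fin.castSucc i) < (Fin.castSucc j) ∧ ins c τ (Fin.castSucc j) < ins c τ (Fin.castSucc i)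
      then 1 else 0) = invA τ := by
    rw [invA_eq_dsum]
    refine Finset.sum_congr rfl fun i _ => Finset.sum_congr rfl fun j _ => ?_
    rw [ins_apply_castSucc, ins_apply_castSucc]
    rw [if_congr (and_congr Fin.castSucc_lt_castSucc_iff Fin.succAbove_lt_succAbove_iff) rfl rfl]
  have b1L : (∑ i : Fin m,
      if (Fin.castSucc i) < (Fin.last m) ∧ ins c τ (Fin.last m) < ins c τ (Fin.castSucc i)
      then 1 else 0) = mcnt c τ := by
    rw [mcnt, card_filter]
    refine Finset.sum_congr rfl fun i _ => ?_
    rw [ins_apply_castSucc, ins_apply_last]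
    rw [if_congr (and_iff_right (Fin.castSucc_lt_last i)) rfl rfl,
      if_congr (self_lt_succAbove c (τ i)) rfl rfl]
  have bL1 : (∑ j : Fin m,
      if (Fin.last m) < (Fin.castSucc j) ∧ ins c τ (Fin.castSucc j) < ins c τ (Fin.last m)
      then 1 else 0) = 0 := by
    refine Finset.sum_eq_zero fun j _ => ?_
    rw [if_neg]
    rintro ⟨h, -⟩
    exact not_last_lt_castSucc j h
  have bLL : (if (Fin.last m) < (Fin.last m) ∧ ins c τ (Fin.last m) < ins c τ (Fin.last m)
      then 1 else 0) = 0 := by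
    rw [if_neg]; rintro ⟨h, -⟩; exact lt_irrefl _ h
  rw [b11, b1L, bL1, bLL]
  omega

lemma oinvA_ins (c : Fin (m + 1)) (τ : Equiv.Perm (Fin m)) :
    oinvA (ins c τ) = oinvA τ + crossC c τ := by
  rw [oinvA_eq_dsum, double_sum_expand]
  have b11 : (∑ i : Fin m, ∑ j : Fin m,
      if (Fin.castSucc i) < (Fin.castSucc j) ∧ (ins c τ (Fin.castSucc j) < ins c τ (Fin.castSucc i)
        ∧ (((Fin.castSucc j) : ℕ) - ((Fin.castSucc i) : ℕ)) % 2 = 1)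
      then 1 else 0) = oinvA τ := by
    rw [oinvA_eq_dsum]
    refine Finset.sum_congr rfl fun i _ => Finset.sum_congr rfl fun j _ => ?_
    rw [ins_apply_castSucc, ins_apply_castSucc]
    refine if_congr (and_congr Fin.castSucc_lt_castSucc_iff
      (and_congr Fin.succAbove_lt_succAbove_iff ?_)) rfl rfl
    simp only [Fin.coe_castSucc]
  have b1L : (∑ i : Fin m,
      if (Fin.castSucc i) < (Fin.last m) ∧ (ins c τ (Fin.last m) < ins c τ (Fin.castSucc i)
        ∧ (((Fin.last m) : ℕ) - ((Fin.castSucc i) : ℕ)) % 2 = 1)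
      then 1 else 0) = crossC c τ := by
    rw [crossC, card_filter]
    refine Finset.sum_congr rfl fun i _ => ?_
    rw [ins_apply_castSucc, ins_apply_last]
    refine if_congr ?_ rfl rfl
    rw [and_iff_right (Fin.castSucc_lt_last i)]
    rw [and_comm]
    refine and_congr ?_ (self_lt_succAbove c (τ i))
    simp only [Fin.val_last, Fin.coe_castSucc]
  have bL1 : (∑ j : Fin m,
      if (Fin.last m) < (Fin.castSucc j) ∧ (ins c τ (Fin.castSucc j) < ins c τ (Fin.last m)
        ∧ (((Fin.castSucc j) : ℕ) - ((Fin.last m) : ℕ)) % 2 = 1)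
      then 1 else 0) = 0 := by
    refine Finset.sum_eq_zero fun j _ => ?_
    rw [if_neg]
    rintro ⟨h, -⟩
    exact not_last_lt_castSucc j h
  have bLL : (if (Fin.last m) < (Fin.last m) ∧ (ins c τ (Fin.last m) < ins c τ (Fin.last m)
      ∧ (((Fin.last m) : ℕ) - ((Fin.last m) : ℕ)) % 2 = 1) then 1 else 0) = 0 := by
    rw [if_neg]; rintro ⟨h, -⟩; exact lt_irrefl _ h
  rw [b11, b1L, bL1, bLL]
  omega

lemma nbo_ins_castSucc (c : Fin (m + 1)) (τ : Equiv.Perm (Fin m)) (j : Fin m) :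
    nbo (ins c τ) (Fin.castSucc j) = nbo τ j := by
  unfold nbo
  rw [card_filter, card_filter, Fin.sum_univ_castSucc]
  have hlast : (if (Fin.last m) < (Fin.castSucc j)
      ∧ (((Fin.castSucc j) : ℕ) - ((Fin.last m) : ℕ)) % 2 = 1
      ∧ ins c τ (Fin.last m) < ins c τ (Fin.castSucc j) then 1 else 0) = 0 := by
    rw [if_neg]
    rintro ⟨h, -⟩
    exact not_last_lt_castSucc j h
  rw [hlast, add_zero]
  refine Finset.sum_congr rfl fun i _ => ?_
  rw [ins_apply_castSucc, ins_apply_castSucc]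
  refine if_congr (and_congr Fin.castSucc_lt_castSucc_iff (and_congr ?_
    Fin.succAbove_lt_succAbove_iff)) rfl rfl
  simp only [Fin.coe_castSucc]

lemma nbo_ins_last (c : Fin (m + 1)) (τ : Equiv.Perm (Fin m)) :
    nbo (ins c τ) (Fin.last m) = ncrossC c τ := by
  unfold nbo ncrossC
  rw [card_filter, card_filter, Fin.sum_univ_castSucc]
  have hlast : (if (Fin.last m) < (Fin.last m)
      ∧ (((Fin.last m) : ℕ) - ((Fin.last m) : ℕ)) % 2 = 1
      ∧ ins c τ (Fin.last m) < ins c τ (Fin.last m) then 1 else 0) = 0 := by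
    rw [if_neg]; rintro ⟨h, -⟩; exact lt_irrefl _ h
  rw [hlast, add_zero]
  refine Finset.sum_congr rfl fun i _ => ?_
  rw [ins_apply_castSucc, ins_apply_last]
  refine if_congr ?_ rfl rfl
  rw [and_iff_right (Fin.castSucc_lt_last i)]
  refine and_congr ?_ (succAbove_lt_self c (τ i))
  simp only [Fin.val_last, Fin.coe_castSucc]

lemma wprod_ins (c : Fin (m + 1)) (τ : Equiv.Perm (Fin m)) :
    (∏ j : Fin (m + 1), (1 + (X : PZ) ^ (2 * nbo (ins c τ) j))) =
      (∏ j : Fin m, (1 + (X : PZ) ^ (2 * nbo τ j))) * (1 + X ^ (2 * ncrossC c τ)) := by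
  rw [Fin.prod_univ_castSucc]
  rw [nbo_ins_last]
  congr 1
  exact Finset.prod_congr rfl fun j _ => by rw [nbo_ins_castSucc]

end Ins

end SGF

namespace SGF

open Finset Equiv Polynomial

section Class

variable {m : ℕ}

lemma ins_symm_self (c : Fin (m + 1)) (τ : Equiv.Perm (Fin m)) :
    (ins c τ).symm c = Fin.last m := by
  rw [Equiv.symm_apply_eq]
  exact (ins_apply_last c τ).symm

lemma ins_symm_succAbove (c : Fin (m + 1)) (τ : Equiv.Perm (Fin m)) (w : Fin m) :
    (ins c τ).symm (c.succAbove w) = Fin.castSucc (τ.symm w) := by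
  rw [Equiv.symm_apply_eq, ins_apply_castSucc, Equiv.apply_symm_apply]

lemma chiF_ins_self (c : Fin (m + 1)) (τ : Equiv.Perm (Fin m)) :
    chiF (ins c τ) c = true := by
  unfold chiF
  rw [ins_symm_self]
  simp only [Fin.val_last, decide_eq_true_eq]
  omega

lemma chiF_ins_succAbove (c : Fin (m + 1)) (τ : Equiv.Perm (Fin m)) (w : Fin m) :
    chiF (ins c τ) (c.succAbove w) = !(chiF τ w) := by
  unfold chiF
  rw [ins_symm_succAbove]
  simp only [Fin.coe_castSucc]
  rw [← decide_not, decide_eq_decide]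
  omega

lemma chiF_ins_eq_iff (c : Fin (m + 1)) (τ : Equiv.Perm (Fin m)) (χ : Fin (m + 1) → Bool) :
    chiF (ins c τ) = χ ↔ (χ c = true ∧ chiF τ = fun u => !(χ (c.succAbove u))) := by
  constructor
  · rintro rfl
    refine ⟨chiF_ins_self c τ, funext fun u => ?_⟩
    rw [chiF_ins_succAbove, Bool.not_not]
  · rintro ⟨h1, h2⟩
    funext v
    rcases eq_or_ne v c with rfl | hvc
    · rw [chiF_ins_self, h1]
    · obtain ⟨w, rfl⟩ := Fin.exists_succAbove_eq hvc
      rw [chiF_ins_succAbove, h2]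
      simp

def mcntK (c : Fin (m + 1)) : ℕ := (univ.filter fun u : Fin m => (c : ℕ) ≤ (u : ℕ)).card

def KX (c : Fin (m + 1)) (χ' : Fin m → Bool) : ℕ :=
  (univ.filter fun u : Fin m => (c : ℕ) ≤ (u : ℕ) ∧ χ' u = true).card

def KNX (c : Fin (m + 1)) (χ' : Fin m → Bool) : ℕ :=
  (univ.filter fun u : Fin m => (u : ℕ) < (c : ℕ) ∧ χ' u = true).card

lemma mcnt_eq (c : Fin (m + 1)) (τ : Equiv.Perm (Fin m)) : mcnt c τ = mcntK c := by
  unfold mcnt mcntK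
  refine Finset.card_bij (fun i _ => τ i) ?_ ?_ ?_
  · intro i hi
    simp only [mem_filter, mem_univ, true_and] at hi ⊢
    exact hi
  · intro a _ b _ h
    exact τ.injective h
  · intro u hu
    simp only [mem_filter, mem_univ, true_and] at hu ⊢
    exact ⟨τ.symm u, by rw [Equiv.apply_symm_apply]; exact hu, Equiv.apply_symm_apply τ u⟩

lemma crossC_fiber (c : Fin (m + 1)) (τ : Equiv.Perm (Fin m)) (χ' : Fin m → Bool)
    (hτ : chiF τ = χ') : crossC c τ = KX c χ' := by
  unfold crossC KX
  subst hτ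
  refine Finset.card_bij (fun i _ => τ i) ?_ ?_ ?_
  · intro i hi
    simp only [mem_filter, mem_univ, true_and] at hi ⊢
    refine ⟨hi.2, ?_⟩
    unfold chiF
    rw [Equiv.symm_apply_apply]
    simp only [decide_eq_true_eq]
    have := i.isLt
    omega
  · intro a _ b _ h
    exact τ.injective h
  · intro u hu
    simp only [mem_filter, mem_univ, true_and] at hu
    have h2 := hu.2
    unfold chiF at h2
    simp only [decide_eq_true_eq] at h2
    refine ⟨τ.symm u, ?_, Equiv.apply_symm_apply τ u⟩
    simp only [mem_filter, mem_univ, true_and]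
    have := (τ.symm u).isLt
    constructor
    · omega
    · rw [Equiv.apply_symm_apply]
      exact hu.1

lemma ncrossC_fiber (c : Fin (m + 1)) (τ : Equiv.Perm (Fin m)) (χ' : Fin m → Bool)
    (hτ : chiF τ = χ') : ncrossC c τ = KNX c χ' := by
  unfold ncrossC KNX
  subst hτ
  refine Finset.card_bij (fun i _ => τ i) ?_ ?_ ?_
  · intro i hi
    simp only [mem_filter, mem_univ, true_and] at hi ⊢
    refine ⟨hi.2, ?_⟩
    unfold chiF
    rw [Equiv.symm_apply_apply]
    simp only [decide_eq_true_eq]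
    have := i.isLt
    omega
  · intro a _ b _ h
    exact τ.injective h
  · intro u hu
    simp only [mem_filter, mem_univ, true_and] at hu
    have h2 := hu.2
    unfold chiF at h2
    simp only [decide_eq_true_eq] at h2
    refine ⟨τ.symm u, ?_, Equiv.apply_symm_apply τ u⟩
    simp only [mem_filter, mem_univ, true_and]
    have := (τ.symm u).isLt
    constructor
    · omega
    · rw [Equiv.apply_symm_apply]
      exact hu.1

lemma Csum_succ (χ : Fin (m + 1) → Bool) :
    Csum (m + 1) χ = ∑ c : Fin (m + 1),
      if χ c = true then
        ((-1) ^ mcntK c * X ^ KX c (fun u => !(χ (c.succAbove u))) *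
          Csum m (fun u => !(χ (c.succAbove u))))
      else 0 := by
  rw [Csum, sum_filter, sum_ins]
  refine Finset.sum_congr rfl fun c _ => ?_
  by_cases hc : χ c = true
  · simp only [hc, if_true]
    rw [Csum, sum_filter, Finset.mul_sum]
    refine Finset.sum_congr rfl fun τ _ => ?_
    by_cases hτ : chiF τ = fun u => !(χ (c.succAbove u))
    · rw [if_pos ((chiF_ins_eq_iff c τ χ).mpr ⟨hc, hτ⟩), if_pos hτ]
      unfold Aterm
      rw [invA_ins, oinvA_ins, mcnt_eq, crossC_fiber c τ _ hτ, pow_add, pow_add]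
      ring
    · rw [if_neg, if_neg hτ, mul_zero]
      rw [chiF_ins_eq_iff]
      rintro ⟨-, h2⟩
      exact hτ h2
  · simp only [hc, if_false]
    refine Finset.sum_eq_zero fun τ _ => ?_
    rw [if_neg]
    rw [chiF_ins_eq_iff]
    rintro ⟨h1, -⟩
    exact hc h1

lemma Wsum_succ (χ : Fin (m + 1) → Bool) :
    Wsum (m + 1) χ = ∑ c : Fin (m + 1),
      if χ c = true then
        ((-1) ^ mcntK c * X ^ KX c (fun u => !(χ (c.succAbove u))) *
          (1 + X ^ (2 * KNX c (fun u => !(χ (c.succAbove u))))) *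
          Wsum m (fun u => !(χ (c.succAbove u))))
      else 0 := by
  rw [Wsum, sum_filter, sum_ins]
  refine Finset.sum_congr rfl fun c _ => ?_
  by_cases hc : χ c = true
  · simp only [hc, if_true]
    rw [Wsum, sum_filter, Finset.mul_sum]
    refine Finset.sum_congr rfl fun τ _ => ?_
    by_cases hτ : chiF τ = fun u => !(χ (c.succAbove u))
    · rw [if_pos ((chiF_ins_eq_iff c τ χ).mpr ⟨hc, hτ⟩), if_pos hτ]
      unfold Wterm Aterm
      rw [invA_ins, oinvA_ins, mcnt_eq, crossC_fiber c τ _ hτ, wprod_ins,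
        ncrossC_fiber c τ _ hτ, pow_add, pow_add]
      ring
    · rw [if_neg, if_neg hτ, mul_zero]
      rw [chiF_ins_eq_iff]
      rintro ⟨-, h2⟩
      exact hτ h2
  · simp only [hc, if_false]
    refine Finset.sum_eq_zero fun τ _ => ?_
    rw [if_neg]
    rw [chiF_ins_eq_iff]
    rintro ⟨h1, -⟩
    exact hc h1

end Class

end SGF

namespace SGF

open Finset Equiv Polynomial

section Counts

variable {m : ℕ}

lemma card_even_fin (m : ℕ) :
    (univ.filter fun u : Fin m => (u : ℕ) % 2 = 0).card = (m + 1) / 2 := by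
  induction m with
  | zero => simp
  | succ k ih =>
    rw [card_filter, Fin.sum_univ_castSucc]
    simp only [Fin.coe_castSucc, Fin.val_last]
    rw [← card_filter, ih]
    rcases Nat.mod_two_eq_zero_or_one k with h | h <;> simp [h] <;> omega

lemma card_odd_fin (m : ℕ) :
    (univ.filter fun u : Fin m => (u : ℕ) % 2 = 1).card = m / 2 := by
  induction m with
  | zero => simp
  | succ k ih =>
    rw [card_filter, Fin.sum_univ_castSucc]
    simp only [Fin.coe_castSucc, Fin.val_last]
    rw [← card_filter, ih]
    rcases Nat.mod_two_eq_zero_or_one k with h | h <;> simp [h] <;> omega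

lemma mcntK_zero : mcntK (0 : Fin (m + 1)) = m := by
  unfold mcntK
  rw [Finset.filter_true_of_mem fun u _ => by simp, card_univ, Fintype.card_fin]

lemma mcntK_last : mcntK (Fin.last m) = 0 := by
  unfold mcntK
  rw [Finset.filter_false_of_mem fun u _ => ?_, card_empty]
  simp only [Fin.val_last, not_le]
  exact u.isLt

lemma KX_zero (χ' : Fin m → Bool) :
    KX (0 : Fin (m + 1)) χ' = (univ.filter fun u : Fin m => χ' u = true).card := by
  unfold KX
  congr 1
  refine Finset.filter_congr fun u _ => ?_
  simp

lemma KX_last (χ' : Fin m → Bool) : KX (Fin.last m) χ' = 0 := by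
  unfold KX
  rw [Finset.filter_false_of_mem fun u _ => ?_, card_empty]
  simp only [Fin.val_last]
  rintro ⟨h, -⟩
  exact absurd h (not_le.mpr u.isLt)

lemma KNX_zero (χ' : Fin m → Bool) : KNX (0 : Fin (m + 1)) χ' = 0 := by
  unfold KNX
  rw [Finset.filter_false_of_mem fun u _ => ?_, card_empty]
  rintro ⟨h, -⟩
  simp at h

lemma KNX_last (χ' : Fin m → Bool) :
    KNX (Fin.last m) χ' = (univ.filter fun u : Fin m => χ' u = true).card := by
  unfold KNX
  congr 1
  refine Finset.filter_congr fun u _ => ?_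
  simp only [Fin.val_last]
  rw [and_iff_right u.isLt]

lemma card_alt_true : (univ.filter fun u : Fin m => altb m true u = true).card = (m + 1) / 2 := by
  rw [show (univ.filter fun u : Fin m => altb m true u = true) =
      (univ.filter fun u : Fin m => (u : ℕ) % 2 = 0) from
    Finset.filter_congr fun u _ => by simp [altb] <;> omega]
  exact card_even_fin m

lemma card_alt_false : (univ.filter fun u : Fin m => altb m false u = true).card = m / 2 := by
  rw [show (univ.filter fun u : Fin m => altb m false u = true) =
      (univ.filter fun u : Fin m => (u : ℕ) % 2 = 1) from
    Finset.filter_congr fun u _ => by simp [altb] <;> omega]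
  exact card_odd_fin m

lemma chi_zero_alt (b : Bool) :
    (fun u : Fin m => !(altb (m + 1) b ((0 : Fin (m + 1)).succAbove u))) = altb m b := by
  funext u
  rw [Fin.zero_succAbove]
  unfold altb
  simp only [Fin.val_succ]
  have hd : decide (((u : ℕ) + 1) % 2 = 1) = !decide ((u : ℕ) % 2 = 1) := by
    rw [← decide_not, decide_eq_decide]
    omega
  rw [hd]
  cases b <;> cases hdu : decide ((u : ℕ) % 2 = 1) <;> rfl

lemma chi_last_alt (b : Bool) :
    (fun u : Fin m => !(altb (m + 1) b ((Fin.last m).succAbove u))) = altb m (!b) := by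
  funext u
  rw [Fin.succAbove_last]
  unfold altb
  simp only [Fin.coe_castSucc]
  cases b <;> cases hdu : decide ((u : ℕ) % 2 = 1) <;> rfl

lemma altb_zero (b : Bool) : altb (m + 1) b 0 = b := by
  simp [altb]

lemma altb_last (b : Bool) : altb (m + 1) b (Fin.last m) = (xor b (decide (m % 2 = 1))) := by
  simp [altb]

lemma mid_adj (b : Bool) {c : Fin (m + 1)} (hc0 : c ≠ 0) (hcl : c ≠ Fin.last m) :
    ∃ v w : Fin m, (w : ℕ) = (v : ℕ) + 1 ∧
      (fun u : Fin m => !(altb (m + 1) b (c.succAbove u))) v =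
      (fun u : Fin m => !(altb (m + 1) b (c.succAbove u))) w := by
  have hc1 : 1 ≤ (c : ℕ) := by
    rcases Nat.eq_zero_or_pos (c : ℕ) with h | h
    · exact absurd (Fin.ext (h.trans (Fin.val_zero (m + 1)).symm)) hc0
    · exact h
  have hcm : (c : ℕ) < m := by
    have h1 := c.isLt
    have h2 : (c : ℕ) ≠ m := fun h => hcl (Fin.ext (by rw [h, Fin.val_last]))
    omega
  refine ⟨⟨(c : ℕ) - 1, by omega⟩, ⟨(c : ℕ), hcm⟩, by simp; omega, ?_⟩
  simp only []
  have hv : ((c.succAbove ⟨(c : ℕ) - 1, by omega⟩ : Fin (m + 1)) : ℕ) = (c : ℕ) - 1 := by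
    rw [succAbove_val]
    simp only []
    rw [if_pos (by omega)]
  have hw : ((c.succAbove ⟨(c : ℕ), hcm⟩ : Fin (m + 1)) : ℕ) = (c : ℕ) + 1 := by
    rw [succAbove_val]
    simp only []
    rw [if_neg (by omega)]
  unfold altb
  rw [hv, hw]
  have hpar : decide (((c : ℕ) - 1) % 2 = 1) = decide (((c : ℕ) + 1) % 2 = 1) := by
    rw [decide_eq_decide]
    omega
  rw [hpar]

lemma sum_two_terms (hm : 1 ≤ m) (f : Fin (m + 1) → PZ)
    (h0 : ∀ c : Fin (m + 1), c ≠ 0 → c ≠ Fin.last m → f c = 0) :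
    ∑ c, f c = f 0 + f (Fin.last m) := by
  have h01 : (0 : Fin (m + 1)) ≠ Fin.last m := by
    intro h
    have := congrArg Fin.val h
    rw [Fin.val_zero, Fin.val_last] at this
    omega
  rw [← Finset.sum_subset (Finset.subset_univ ({0, Fin.last m} : Finset (Fin (m + 1))))
    fun x _ hx => ?_]
  · exact Finset.sum_pair h01
  · simp only [mem_insert, mem_singleton] at hx
    push_neg at hx
    exact h0 x hx.1 hx.2

end Counts

end SGF

namespace SGF

open Finset Equiv Polynomial

noncomputable def Cf (m : ℕ) : PZ := if m % 2 = 1 then Apoly m else -X ^ (m / 2) * Apoly (m - 1)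
noncomputable def Ct (m : ℕ) : PZ := if m % 2 = 1 then 0 else Apoly (m - 1)
noncomputable def Wf (m : ℕ) : PZ :=
  if m % 2 = 1 then 2 * Apoly m ^ 2 else -(4 : PZ) * X ^ (m / 2) * Apoly (m - 1) ^ 2
noncomputable def Wt (m : ℕ) : PZ :=
  if m % 2 = 1 then 0 else 2 * (1 + X ^ m) * Apoly (m - 1) ^ 2

lemma Apoly_one : Apoly 1 = 1 := by
  unfold Apoly
  rw [Finset.Icc_eq_empty (by omega), prod_empty]

lemma Apoly_succ (m : ℕ) (hm : 1 ≤ m) :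
    Apoly (m + 1) = Apoly m * (1 + (-1 : PZ) ^ m * X ^ ((m + 1) / 2)) := by
  unfold Apoly
  rw [Finset.prod_Icc_succ_top (by omega)]
  rw [Nat.add_sub_cancel]

lemma pairsF_one : pairsF 1 = ∅ := by
  rw [Finset.eq_empty_iff_forall_notMem]
  intro p hp
  have h := (mem_filter.mp hp).2
  have h1 : p.1 = p.2 := Subsingleton.elim _ _
  rw [h1] at h
  exact lt_irrefl _ h

lemma master_base :
    Csum 1 (altb 1 true) = Cf 1 ∧ Csum 1 (altb 1 false) = Ct 1 ∧
    Wsum 1 (altb 1 true) = Wf 1 ∧ Wsum 1 (altb 1 false) = Wt 1 := by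
  have huniv : (univ : Finset (Equiv.Perm (Fin 1))) = {1} :=
    Finset.eq_singleton_iff_unique_mem.mpr
      ⟨mem_univ 1, fun π _ => Equiv.ext fun i => Subsingleton.elim _ _⟩
  have hchi : chiF (1 : Equiv.Perm (Fin 1)) = altb 1 true := by
    funext v
    have hv : v = 0 := Subsingleton.elim v 0
    subst hv
    rfl
  have hne : chiF (1 : Equiv.Perm (Fin 1)) ≠ altb 1 false := by
    rw [hchi]
    exact altb_true_ne_false (by omega)
  have hinv : invA (1 : Equiv.Perm (Fin 1)) = 0 := by
    unfold invA
    rw [pairsF_one, filter_empty, card_empty]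
  have hoinv : oinvA (1 : Equiv.Perm (Fin 1)) = 0 := by
    unfold oinvA
    rw [pairsF_one, filter_empty, card_empty]
  have hAterm : Aterm (1 : Equiv.Perm (Fin 1)) = 1 := by
    unfold Aterm
    rw [hinv, hoinv, pow_zero, pow_zero, mul_one]
  have hnbo : nbo (1 : Equiv.Perm (Fin 1)) 0 = 0 := by
    unfold nbo
    rw [Finset.filter_false_of_mem, card_empty]
    rintro i _ ⟨h, -⟩
    have h1 : i = 0 := Subsingleton.elim _ _
    rw [h1] at h
    exact lt_irrefl _ h
  have hWterm : Wterm (1 : Equiv.Perm (Fin 1)) = 2 := by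
    unfold Wterm
    rw [hAterm, one_mul, Fin.prod_univ_one, hnbo]
    norm_num
  have hCsumT : Csum 1 (altb 1 true) = 1 := by
    rw [Csum, huniv, Finset.filter_singleton, if_pos hchi, sum_singleton, hAterm]
  have hCsumF : Csum 1 (altb 1 false) = 0 := by
    rw [Csum, huniv, Finset.filter_singleton, if_neg hne, sum_empty]
  have hWsumT : Wsum 1 (altb 1 true) = 2 := by
    rw [Wsum, huniv, Finset.filter_singleton, if_pos hchi, sum_singleton, hWterm]
  have hWsumF : Wsum 1 (altb 1 false) = 0 := by
    rw [Wsum, huniv, Finset.filter_singleton, if_neg hne, sum_empty]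
  refine ⟨?_, ?_, ?_, ?_⟩
  · rw [hCsumT, Cf, if_pos (by omega : 1 % 2 = 1), Apoly_one]
  · rw [hCsumF, Ct, if_pos (by omega : 1 % 2 = 1)]
  · rw [hWsumT, Wf, if_pos (by omega : 1 % 2 = 1), Apoly_one]
    norm_num
  · rw [hWsumF, Wt, if_pos (by omega : 1 % 2 = 1)]

lemma master (m : ℕ) (hm : 1 ≤ m) :
    Csum m (altb m true) = Cf m ∧ Csum m (altb m false) = Ct m ∧
    Wsum m (altb m true) = Wf m ∧ Wsum m (altb m false) = Wt m := by
  induction m with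
  | zero => omega
  | succ k ih =>
    rcases Nat.eq_zero_or_pos k with hk | hk
    · subst hk
      exact master_base
    obtain ⟨ihCT, ihCF, ihWT, ihWF⟩ := ih hk
    have midC : ∀ b : Bool, ∀ c : Fin (k + 1), c ≠ 0 → c ≠ Fin.last k →
        (if altb (k + 1) b c = true then
          ((-1 : PZ) ^ mcntK c * X ^ KX c (fun u => !(altb (k + 1) b (c.succAbove u))) *
            Csum k (fun u => !(altb (k + 1) b (c.succAbove u))))
        else 0) = 0 := by
      intro b c h0 hl
      obtain ⟨v, w, hw, hvw⟩ := mid_adj b h0 hl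
      have hz := (vanish (fun u => !(altb (k + 1) b (c.succAbove u))) hw hvw).1
      rw [hz, mul_zero, ite_self]
    have midW : ∀ b : Bool, ∀ c : Fin (k + 1), c ≠ 0 → c ≠ Fin.last k →
        (if altb (k + 1) b c = true then
          ((-1 : PZ) ^ mcntK c * X ^ KX c (fun u => !(altb (k + 1) b (c.succAbove u))) *
            (1 + X ^ (2 * KNX c (fun u => !(altb (k + 1) b (c.succAbove u))))) *
            Wsum k (fun u => !(altb (k + 1) b (c.succAbove u))))
        else 0) = 0 := by
      intro b c h0 hl
      obtain ⟨v, w, hw, hvw⟩ := mid_adj b h0 hl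
      have hz := (vanish (fun u => !(altb (k + 1) b (c.succAbove u))) hw hvw).2
      rw [hz, mul_zero, ite_self]
    have eCT : Csum (k + 1) (altb (k + 1) true) =
        ((-1 : PZ) ^ k * X ^ ((k + 1) / 2) * Cf k) +
          (if k % 2 = 1 then 0 else Ct k) := by
      rw [Csum_succ, sum_two_terms hk _ (midC true)]
      congr 1
      · rw [if_pos (altb_zero true), chi_zero_alt true, mcntK_zero, KX_zero, card_alt_true, ihCT]
      · rw [altb_last]
        rcases Nat.mod_two_eq_zero_or_one k with hp | hp
        · rw [if_neg (by omega : ¬ k % 2 = 1)]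
          have hcond : (true ^^ decide (k % 2 = 1)) = true := by
            simp [hp]
          rw [if_pos hcond, chi_last_alt true, mcntK_last, KX_last, Bool.not_true, ihCF]
          rw [pow_zero, pow_zero]
          ring
        · rw [if_pos hp]
          have hcond : ¬ ((true ^^ decide (k % 2 = 1)) = true) := by
            simp [hp]
          rw [if_neg hcond]
    have eCF : Csum (k + 1) (altb (k + 1) false) =
        (if k % 2 = 1 then Cf k else 0) := by
      rw [Csum_succ, sum_two_terms hk _ (midC false)]
      rw [if_neg (by rw [altb_zero]; exact Bool.false_ne_true), zero_add]
      rw [altb_last]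
      rcases Nat.mod_two_eq_zero_or_one k with hp | hp
      · rw [if_neg (by omega : ¬ k % 2 = 1)]
        have hcond : ¬ ((false ^^ decide (k % 2 = 1)) = true) := by
          simp [hp]
        rw [if_neg hcond]
      · rw [if_pos hp]
        have hcond : (false ^^ decide (k % 2 = 1)) = true := by
          simp [hp]
        rw [if_pos hcond, chi_last_alt false, mcntK_last, KX_last, Bool.not_false, ihCT]
        rw [pow_zero, pow_zero]
        ring
    have eWT : Wsum (k + 1) (altb (k + 1) true) =
        ((-1 : PZ) ^ k * X ^ ((k + 1) / 2) * 2 * Wf k) +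
          (if k % 2 = 1 then 0 else (1 + X ^ (2 * (k / 2))) * Wt k) := by
      rw [Wsum_succ, sum_two_terms hk _ (midW true)]
      congr 1
      · rw [if_pos (altb_zero true), chi_zero_alt true, mcntK_zero, KX_zero, card_alt_true,
          KNX_zero, ihWT]
        rw [mul_zero, pow_zero]
        ring
      · rw [altb_last]
        rcases Nat.mod_two_eq_zero_or_one k with hp | hp
        · rw [if_neg (by omega : ¬ k % 2 = 1)]
          have hcond : (true ^^ decide (k % 2 = 1)) = true := by simp [hp]
          rw [if_pos hcond, chi_last_alt true, mcntK_last, KX_last, Bool.not_true,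
            KNX_last, card_alt_false, ihWF]
          rw [pow_zero, pow_zero]
          ring
        · rw [if_pos hp]
          have hcond : ¬ ((true ^^ decide (k % 2 = 1)) = true) := by simp [hp]
          rw [if_neg hcond]
    have eWF : Wsum (k + 1) (altb (k + 1) false) =
        (if k % 2 = 1 then (1 + X ^ (2 * ((k + 1) / 2))) * Wf k else 0) := by
      rw [Wsum_succ, sum_two_terms hk _ (midW false)]
      rw [if_neg (by rw [altb_zero]; exact Bool.false_ne_true), zero_add]
      rw [altb_last]
      rcases Nat.mod_two_eq_zero_or_one k with hp | hp
      · rw [if_neg (by omega : ¬ k % 2 = 1)]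
        have hcond : ¬ ((false ^^ decide (k % 2 = 1)) = true) := by simp [hp]
        rw [if_neg hcond]
      · rw [if_pos hp]
        have hcond : (false ^^ decide (k % 2 = 1)) = true := by simp [hp]
        rw [if_pos hcond, chi_last_alt false, mcntK_last, KX_last, Bool.not_false,
          KNX_last, card_alt_true, ihWT]
        rw [pow_zero, pow_zero]
        ring
    rcases Nat.mod_two_eq_zero_or_one k with hp | hp
    · -- k even, k = 2*t+2
      obtain ⟨t, rfl⟩ : ∃ t, k = 2 * t + 2 := ⟨(k - 2) / 2, by omega⟩
      have hp' : ¬ ((2 * t + 2) % 2 = 1) := by omega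
      have hp1 : (2 * t + 2 + 1) % 2 = 1 := by omega
      have hodd1 : (-1 : PZ) ^ (2 * t + 1) = -1 := Odd.neg_one_pow ⟨t, by ring⟩
      have heven : (-1 : PZ) ^ (2 * t + 2) = 1 := Even.neg_one_pow ⟨t + 1, by ring⟩
      have d1 : (2 * t + 2) / 2 = t + 1 := by omega
      have d2 : (2 * t + 2 + 1) / 2 = t + 1 := by omega
      have d3 : 2 * t + 2 - 1 = 2 * t + 1 := by omega
      have d4 : 2 * t + 2 + 1 - 1 = 2 * t + 2 := by omega
      have A2 : Apoly (2 * t + 2) = Apoly (2 * t + 1) * (1 + (-1 : PZ) ^ (2 * t + 1) * X ^ ((2 * t + 1 + 1) / 2)) := by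
        have h := Apoly_succ (2 * t + 1) (by omega)
        rw [show 2 * t + 1 + 1 = 2 * t + 2 from by omega] at h
        exact h
      have A3 : Apoly (2 * t + 2 + 1) = Apoly (2 * t + 2) * (1 + (-1 : PZ) ^ (2 * t + 2) * X ^ ((2 * t + 2 + 1) / 2)) :=
        Apoly_succ (2 * t + 2) (by omega)
      have d5 : (2 * t + 1 + 1) / 2 = t + 1 := by omega
      rw [A2, hodd1, d5] at A3
      refine ⟨?_, ?_, ?_, ?_⟩
      · rw [eCT, if_neg hp']
        simp only [Cf, Ct, if_neg hp', if_pos hp1]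
        rw [heven, d1, d2, d3, A3, heven, d2]
        ring
      · rw [eCF, if_neg hp']
        simp only [Ct, if_pos hp1]
      · rw [eWT, if_neg hp']
        simp only [Wf, Wt, if_neg hp', if_pos hp1]
        rw [heven, d1, d2, d3, A3, heven, d2]
        ring
      · rw [eWF, if_neg hp']
        simp only [Wt, if_pos hp1]
    · -- k odd, k = 2*t+1
      obtain ⟨t, rfl⟩ : ∃ t, k = 2 * t + 1 := ⟨k / 2, by omega⟩
      have hp' : (2 * t + 1) % 2 = 1 := by omega
      have hpn : ¬ ((2 * t + 1 + 1) % 2 = 1) := by omega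
      have hodd1 : (-1 : PZ) ^ (2 * t + 1) = -1 := Odd.neg_one_pow ⟨t, by ring⟩
      have e1 : (2 * t + 1 + 1) / 2 = t + 1 := by omega
      have e2 : 2 * t + 1 + 1 - 1 = 2 * t + 1 := by omega
      refine ⟨?_, ?_, ?_, ?_⟩
      · rw [eCT, if_pos hp']
        simp only [Cf, if_pos hp', if_neg hpn]
        rw [hodd1, e1, e2, add_zero]
        ring
      · rw [eCF, if_pos hp']
        simp only [Cf, Ct, if_pos hp', if_neg hpn]
        rw [e2]
      · rw [eWT, if_pos hp']
        simp only [Wf, if_pos hp', if_neg hpn]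
        rw [hodd1, e1, e2, add_zero]
        ring
      · rw [eWF, if_pos hp']
        simp only [Wf, Wt, if_pos hp', if_neg hpn]
        rw [e1, e2]
        ring

end SGF

namespace SGF

open Finset Equiv Polynomial

lemma CfCt (m : ℕ) (hm : 1 ≤ m) : Cf m + Ct m = Apoly m := by
  rcases Nat.mod_two_eq_zero_or_one m with hp | hp
  · obtain ⟨t, rfl⟩ : ∃ t, m = 2 * t + 2 := ⟨(m - 2) / 2, by omega⟩
    simp only [Cf, Ct, if_neg (by omega : ¬ (2 * t + 2) % 2 = 1)]
    have A2 : Apoly (2 * t + 2) = Apoly (2 * t + 1) *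
        (1 + (-1 : PZ) ^ (2 * t + 1) * X ^ ((2 * t + 1 + 1) / 2)) := by
      have h := Apoly_succ (2 * t + 1) (by omega)
      rw [show 2 * t + 1 + 1 = 2 * t + 2 from by omega] at h
      exact h
    rw [show 2 * t + 2 - 1 = 2 * t + 1 from by omega, A2, Odd.neg_one_pow ⟨t, by ring⟩,
      show (2 * t + 1 + 1) / 2 = t + 1 from by omega]
    ring
  · simp only [Cf, Ct, if_pos hp, add_zero]

lemma WfWt (m : ℕ) (hm : 1 ≤ m) : Wf m + Wt m = 2 * Apoly m ^ 2 := by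
  rcases Nat.mod_two_eq_zero_or_one m with hp | hp
  · obtain ⟨t, rfl⟩ : ∃ t, m = 2 * t + 2 := ⟨(m - 2) / 2, by omega⟩
    simp only [Wf, Wt, if_neg (by omega : ¬ (2 * t + 2) % 2 = 1)]
    have A2 : Apoly (2 * t + 2) = Apoly (2 * t + 1) *
        (1 + (-1 : PZ) ^ (2 * t + 1) * X ^ ((2 * t + 1 + 1) / 2)) := by
      have h := Apoly_succ (2 * t + 1) (by omega)
      rw [show 2 * t + 1 + 1 = 2 * t + 2 from by omega] at h
      exact h
    rw [show 2 * t + 2 - 1 = 2 * t + 1 from by omega, A2, Odd.neg_one_pow ⟨t, by ring⟩,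
      show (2 * t + 1 + 1) / 2 = t + 1 from by omega]
    ring
  · simp only [Wf, Wt, if_pos hp, add_zero]

lemma Asum_eq (m : ℕ) (hm : 1 ≤ m) : ∑ π : Equiv.Perm (Fin m), Aterm π = Apoly m := by
  have hM := master m hm
  have h0 : 0 < m := hm
  rw [← Finset.sum_fiberwise univ chiF Aterm]
  have hpt : ∀ χ : Fin m → Bool,
      (∑ π ∈ univ.filter fun π : Equiv.Perm (Fin m) => chiF π = χ, Aterm π) =
      (if χ = altb m true then Cf m else 0) + (if χ = altb m false then Ct m else 0) := by
    intro χ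
    by_cases h1 : χ = altb m true
    · subst h1
      rw [if_pos rfl, if_neg (altb_true_ne_false h0), add_zero]
      exact hM.1
    by_cases h2 : χ = altb m false
    · subst h2
      rw [if_neg fun h => (altb_true_ne_false h0) h.symm, if_pos rfl, zero_add]
      exact hM.2.1
    · rw [if_neg h1, if_neg h2, add_zero]
      exact (csum_wsum_ne_alt χ h1 h2).1
  rw [Finset.sum_congr rfl fun χ _ => hpt χ, Finset.sum_add_distrib,
    Finset.sum_ite_eq' univ (altb m true) (fun _ => Cf m),
    Finset.sum_ite_eq' univ (altb m false) (fun _ => Ct m),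
    if_pos (mem_univ _), if_pos (mem_univ _)]
  exact CfCt m hm

lemma Wsum_total (m : ℕ) (hm : 1 ≤ m) :
    ∑ π : Equiv.Perm (Fin m), Wterm π = 2 * Apoly m ^ 2 := by
  have hM := master m hm
  have h0 : 0 < m := hm
  rw [← Finset.sum_fiberwise univ chiF Wterm]
  have hpt : ∀ χ : Fin m → Bool,
      (∑ π ∈ univ.filter fun π : Equiv.Perm (Fin m) => chiF π = χ, Wterm π) =
      (if χ = altb m true then Wf m else 0) + (if χ = altb m false then Wt m else 0) := by
    intro χ
    by_cases h1 : χ = altb m true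
    · subst h1
      rw [if_pos rfl, if_neg (altb_true_ne_false h0), add_zero]
      exact hM.2.2.1
    by_cases h2 : χ = altb m false
    · subst h2
      rw [if_neg fun h => (altb_true_ne_false h0) h.symm, if_pos rfl, zero_add]
      exact hM.2.2.2
    · rw [if_neg h1, if_neg h2, add_zero]
      exact (csum_wsum_ne_alt χ h1 h2).2
  rw [Finset.sum_congr rfl fun χ _ => hpt χ, Finset.sum_add_distrib,
    Finset.sum_ite_eq' univ (altb m true) (fun _ => Wf m),
    Finset.sum_ite_eq' univ (altb m false) (fun _ => Wt m),
    if_pos (mem_univ _), if_pos (mem_univ _)]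
  exact WfWt m hm

end SGF

namespace SGF

open Finset Equiv Polynomial

section Bside

variable {n : ℕ}

lemma pair_contrib (σ : BG n) (i j : Fin n) (hij : i < j) :
    ((if wval σ j < wval σ i then 1 else 0) + (if wval σ i + wval σ j < 0 then 1 else 0) : ℕ)
    = (if σ.1 j < σ.1 i then 1 else 0)
      + 2 * (if σ.2 j = true ∧ σ.1 i < σ.1 j then 1 else 0) := by
  have hne : ((σ.1 i : ℕ)) ≠ ((σ.1 j : ℕ)) := by
    intro h
    exact absurd (σ.1.injective (Fin.val_injective h)) (ne_of_lt hij)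
  cases hsi : σ.2 i <;> cases hsj : σ.2 j <;>
    simp only [wval, hsi, hsj, if_true, if_false, Bool.true_and, true_and, false_and,
      Bool.false_eq_true, Fin.lt_def] <;>
    split_ifs <;> omega

lemma pair_contrib_odd (σ : BG n) (i j : Fin n) (hij : i < j) :
    ((if wval σ j < wval σ i ∧ ((j : ℕ) - (i : ℕ)) % 2 = 1 then 1 else 0)
      + (if wval σ i + wval σ j < 0 ∧ ((j : ℕ) - (i : ℕ)) % 2 = 1 then 1 else 0) : ℕ)
    = (if σ.1 j < σ.1 i ∧ ((j : ℕ) - (i : ℕ)) % 2 = 1 then 1 else 0)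
      + 2 * (if σ.2 j = true ∧ (((j : ℕ) - (i : ℕ)) % 2 = 1 ∧ σ.1 i < σ.1 j) then 1 else 0) := by
  by_cases hodd : ((j : ℕ) - (i : ℕ)) % 2 = 1
  · simp only [hodd, and_true, true_and]
    exact pair_contrib σ i j hij
  · simp [hodd]

lemma lenD_decomp (σ : BG n) : lenD σ = invA σ.1 +
    2 * ∑ p ∈ pairsF n, (if σ.2 p.2 = true ∧ σ.1 p.1 < σ.1 p.2 then 1 else 0) := by
  unfold lenD invB nspB invA
  rw [card_filter, card_filter, card_filter, ← Finset.sum_add_distrib, Finset.mul_sum,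
    ← Finset.sum_add_distrib]
  refine Finset.sum_congr rfl fun p hp => ?_
  exact pair_contrib σ p.1 p.2 (mem_filter.mp hp).2

lemma ite_nest {a b : Prop} [Decidable a] [Decidable b] (x : ℕ) :
    (if a then (if b then x else 0) else 0) = if a ∧ b then x else 0 := by
  by_cases ha : a <;> by_cases hb : b <;> simp [ha, hb]

lemma LD_decomp (σ : BG n) :
    LD σ = oinvA σ.1 + 2 * ∑ j ∈ univ.filter (fun j : Fin n => σ.2 j = true), nbo σ.1 j := by
  have step1 : LD σ = oinvA σ.1 + 2 * ∑ p ∈ pairsF n,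
      (if σ.2 p.2 = true ∧ (((p.2 : ℕ) - (p.1 : ℕ)) % 2 = 1 ∧ σ.1 p.1 < σ.1 p.2)
        then 1 else 0) := by
    unfold LD oinvB onspB oinvA
    rw [card_filter, card_filter, card_filter, ← Finset.sum_add_distrib, Finset.mul_sum,
      ← Finset.sum_add_distrib]
    refine Finset.sum_congr rfl fun p hp => ?_
    exact pair_contrib_odd σ p.1 p.2 (mem_filter.mp hp).2
  rw [step1]
  congr 2
  have key : ∀ j : Fin n,
      (∑ i : Fin n, if i < j ∧ (σ.2 j = true ∧ (((j : ℕ) - (i : ℕ)) % 2 = 1 ∧ σ.1 i < σ.1 j))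
        then (1:ℕ) else 0) = if σ.2 j = true then nbo σ.1 j else 0 := by
    intro j
    by_cases hs : σ.2 j = true
    · rw [if_pos hs]
      unfold nbo
      rw [card_filter]
      refine Finset.sum_congr rfl fun i _ => ?_
      refine if_congr ?_ rfl rfl
      constructor
      · rintro ⟨h1, -, h2, h3⟩; exact ⟨h1, h2, h3⟩
      · rintro ⟨h1, h2, h3⟩; exact ⟨h1, hs, h2, h3⟩
    · rw [if_neg hs]
      refine Finset.sum_eq_zero fun i _ => ?_
      rw [if_neg]
      rintro ⟨-, h, -⟩
      exact hs h
  calc ∑ p ∈ pairsF n, (if σ.2 p.2 = true ∧ (((p.2 : ℕ) - (p.1 : ℕ)) % 2 = 1 ∧ σ.1 p.1 < σ.1 p.2)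
        then (1:ℕ) else 0)
      = ∑ p : Fin n × Fin n, (if p.1 < p.2 ∧ (σ.2 p.2 = true ∧ (((p.2 : ℕ) - (p.1 : ℕ)) % 2 = 1 ∧ σ.1 p.1 < σ.1 p.2))
        then (1:ℕ) else 0) := by
        rw [pairsF, Finset.sum_filter]
        exact Finset.sum_congr rfl fun p _ => ite_nest 1
    _ = ∑ j : Fin n, ∑ i : Fin n, (if i < j ∧ (σ.2 j = true ∧ (((j : ℕ) - (i : ℕ)) % 2 = 1 ∧ σ.1 i < σ.1 j))
        then (1:ℕ) else 0) := by
        rw [Fintype.sum_prod_type, Finset.sum_comm]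
    _ = ∑ j : Fin n, (if σ.2 j = true then nbo σ.1 j else 0) :=
        Finset.sum_congr rfl fun j _ => key j
    _ = ∑ j ∈ univ.filter (fun j : Fin n => σ.2 j = true), nbo σ.1 j := by
        rw [Finset.sum_filter]

noncomputable def Phi (σ : BG n) : PZ :=
  (-1) ^ invA σ.1 * X ^ oinvA σ.1 *
    ∏ j ∈ univ.filter (fun j : Fin n => σ.2 j = true), X ^ (2 * nbo σ.1 j)

lemma term_eq_Phi (σ : BG n) : (-1 : PZ) ^ lenD σ * X ^ LD σ = Phi σ := by
  unfold Phi
  have h1 : (-1 : PZ) ^ lenD σ = (-1) ^ invA σ.1 := by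
    rw [lenD_decomp, pow_add, pow_mul]
    norm_num
  rw [h1, LD_decomp, pow_add, Finset.mul_sum, ← Finset.prod_pow_eq_pow_sum]
  ring

lemma nbo_at_zero (π : Equiv.Perm (Fin n)) (i₀ : Fin n) (h : (π i₀ : ℕ) = 0) : nbo π i₀ = 0 := by
  unfold nbo
  rw [Finset.filter_false_of_mem, card_empty]
  rintro i _ ⟨-, -, hlt⟩
  have := Fin.lt_def.mp hlt
  omega

end Bside

end SGF

namespace SGF

open Finset Equiv Polynomial

section Flip

variable {n : ℕ}

def flip1 (hn : 0 < n) (σ : BG n) : BG n :=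
  (σ.1, Function.update σ.2 (σ.1.symm ⟨0, hn⟩) (!σ.2 (σ.1.symm ⟨0, hn⟩)))

lemma flip1_flip1 (hn : 0 < n) (σ : BG n) : flip1 hn (flip1 hn σ) = σ := by
  unfold flip1
  have h1 : Function.update σ.2 (σ.1.symm ⟨0, hn⟩) (!σ.2 (σ.1.symm ⟨0, hn⟩)) (σ.1.symm ⟨0, hn⟩)
      = !σ.2 (σ.1.symm ⟨0, hn⟩) := Function.update_self _ _ _
  simp only [h1, Bool.not_not, Function.update_idem, Function.update_eq_self]

lemma Phi_flip (hn : 0 < n) (σ : BG n) : Phi (flip1 hn σ) = Phi σ := by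
  unfold Phi flip1
  simp only []
  congr 1
  have hz : (σ.1 (σ.1.symm ⟨0, hn⟩) : ℕ) = 0 := by
    rw [Equiv.apply_symm_apply]
  have hfac : (X : PZ) ^ (2 * nbo σ.1 (σ.1.symm ⟨0, hn⟩)) = 1 := by
    rw [nbo_at_zero σ.1 _ hz, mul_zero, pow_zero]
  rw [← Finset.prod_erase (f := fun j => (X : PZ) ^ (2 * nbo σ.1 j)) _ hfac]
  conv_rhs => rw [← Finset.prod_erase (f := fun j => (X : PZ) ^ (2 * nbo σ.1 j)) _ hfac]
  congr 1
  ext y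
  simp only [Finset.mem_erase, mem_filter, mem_univ, true_and]
  constructor
  · rintro ⟨hy, h2⟩
    rw [Function.update_of_ne hy] at h2
    exact ⟨hy, h2⟩
  · rintro ⟨hy, h2⟩
    rw [Function.update_of_ne hy]
    exact ⟨hy, h2⟩

lemma nnegB_filter (σ : BG n) : nnegB σ = (univ.filter fun i => σ.2 i = true).card := by
  unfold nnegB
  congr 1
  refine Finset.filter_congr fun i _ => ?_
  unfold wval
  have hge : (0 : ℤ) ≤ (σ.1 i : ℤ) := Int.natCast_nonneg _
  cases hsi : σ.2 i <;> simp [hsi] <;> omega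

lemma even_flip (hn : 0 < n) (σ : BG n) :
    Even (nnegB (flip1 hn σ)) ↔ ¬ Even (nnegB σ) := by
  rw [nnegB_filter, nnegB_filter]
  unfold flip1
  simp only []
  by_cases hs : σ.2 (σ.1.symm ⟨0, hn⟩) = true
  · have hset : (univ.filter fun i => Function.update σ.2 (σ.1.symm ⟨0, hn⟩)
        (!σ.2 (σ.1.symm ⟨0, hn⟩)) i = true)
        = (univ.filter fun i => σ.2 i = true).erase (σ.1.symm ⟨0, hn⟩) := by
      ext y
      simp only [mem_filter, mem_univ, true_and, Finset.mem_erase]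
      rcases eq_or_ne y (σ.1.symm ⟨0, hn⟩) with rfl | hy
      · rw [Function.update_self, hs]
        simp
      · rw [Function.update_of_ne hy]
        simp [hy]
    rw [hset, Finset.card_erase_of_mem
      (mem_filter.mpr ⟨mem_univ (σ.1.symm ⟨0, hn⟩), hs⟩ :
        σ.1.symm ⟨0, hn⟩ ∈ univ.filter fun i => σ.2 i = true)]
    have hpos : 0 < (univ.filter fun i => σ.2 i = true).card :=
      card_pos.mpr ⟨_, mem_filter.mpr ⟨mem_univ _, hs⟩⟩
    rw [Nat.even_iff, Nat.even_iff]
    omega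
  · have hset : (univ.filter fun i => Function.update σ.2 (σ.1.symm ⟨0, hn⟩)
        (!σ.2 (σ.1.symm ⟨0, hn⟩)) i = true)
        = insert (σ.1.symm ⟨0, hn⟩) (univ.filter fun i => σ.2 i = true) := by
      ext y
      simp only [mem_filter, mem_univ, true_and, Finset.mem_insert]
      rcases eq_or_ne y (σ.1.symm ⟨0, hn⟩) with rfl | hy
      · rw [Function.update_self]
        simp [hs]
      · rw [Function.update_of_ne hy]
        simp [hy]
    rw [hset, Finset.card_insert_of_notMem
      (fun h : σ.1.symm ⟨0, hn⟩ ∈ univ.filter fun i => σ.2 i = true =>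
        hs (mem_filter.mp h).2)]
    rw [Nat.even_iff, Nat.even_iff]
    omega

lemma sum_phi_odd_eq (hn : 0 < n) :
    ∑ σ ∈ univ.filter (fun σ : BG n => ¬ Even (nnegB σ)), Phi σ
      = ∑ σ ∈ univ.filter (fun σ : BG n => Even (nnegB σ)), Phi σ := by
  refine Finset.sum_nbij' (fun σ => flip1 hn σ) (fun σ => flip1 hn σ) ?_ ?_ ?_ ?_ ?_
  · intro σ hσ
    simp only [mem_filter, mem_univ, true_and] at hσ ⊢
    rw [even_flip hn σ]
    exact hσ
  · intro σ hσ
    simp only [mem_filter, mem_univ, true_and] at hσ ⊢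
    rw [even_flip hn σ]
    simp [hσ]
  · intro σ _
    exact flip1_flip1 hn σ
  · intro σ _
    exact flip1_flip1 hn σ
  · intro σ _
    exact (Phi_flip hn σ).symm

lemma two_seven (hn : 0 < n) :
    2 * (∑ σ ∈ univ.filter (fun σ : BG n => Even (nnegB σ)), Phi σ) = ∑ σ : BG n, Phi σ := by
  rw [two_mul]
  nth_rewrite 1 [← sum_phi_odd_eq hn]
  rw [add_comm]
  exact Finset.sum_filter_add_sum_filter_not univ _ Phi

lemma sum_bool_prod (g : Fin n → PZ) :
    ∑ s : Fin n → Bool, ∏ j ∈ univ.filter (fun j => s j = true), g j = ∏ j, (1 + g j) := by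
  have h1 : ∀ j : Fin n, (1 + g j) = ∑ b ∈ (univ : Finset Bool), (if b = true then g j else 1) := by
    intro j
    rw [Fintype.sum_bool]
    simp [add_comm]
  rw [Finset.prod_congr rfl fun j (_ : j ∈ univ) => h1 j, Finset.prod_univ_sum]
  rw [Fintype.piFinset_univ]
  refine Finset.sum_congr rfl fun s _ => ?_
  rw [Finset.prod_filter]

lemma total (hn : 0 < n) : ∑ σ : BG n, Phi σ = 2 * Apoly n ^ 2 := by
  rw [Fintype.sum_prod_type]
  have hinner : ∀ π : Equiv.Perm (Fin n), (∑ s : Fin n → Bool, Phi (π, s)) = Wterm π := by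
    intro π
    have hrw : ∀ s : Fin n → Bool, Phi (π, s) =
        ((-1 : PZ) ^ invA π * X ^ oinvA π) *
          ∏ j ∈ univ.filter (fun j => s j = true), (X : PZ) ^ (2 * nbo π j) := fun s => rfl
    rw [Finset.sum_congr rfl fun s _ => hrw s, ← Finset.mul_sum,
      sum_bool_prod (fun j => (X : PZ) ^ (2 * nbo π j))]
    rfl
  rw [Finset.sum_congr rfl fun π _ => hinner π]
  exact Wsum_total n hn

lemma seven (hn : 0 < n) :
    ∑ σ ∈ univ.filter (fun σ : BG n => Even (nnegB σ)), Phi σ = Apoly n ^ 2 := by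
  have h2 : (2 : PZ) * (∑ σ ∈ univ.filter (fun σ : BG n => Even (nnegB σ)), Phi σ)
      = 2 * (Apoly n ^ 2) := by
    rw [two_seven hn, total hn]
  have h20 : (2 : PZ) ≠ 0 := by norm_num
  exact mul_left_cancel₀ h20 h2

end Flip

end SGF


open SGF Polynomial

/-- the signed generating function of the type `D` odd length over `D_n` is the
square of the type `A` one, and the type `A` one factors explicitly -/
theorem signed_genfun_typeD (n : ℕ) (hn : 2 ≤ n) (R : Type*) [CommRing R] (x : R) :
    (∑ σ ∈ univ.filter (fun σ : BG n => Even (nnegB σ)),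
        (-1 : R) ^ lenD σ * x ^ LD σ =
      (∏ i ∈ Icc 2 n, (1 + (-1 : R) ^ (i - 1) * x ^ (i / 2))) ^ 2) ∧
    (∑ σ : Equiv.Perm (Fin n), (-1 : R) ^ invA σ * x ^ oinvA σ =
      ∏ i ∈ Icc 2 n, (1 + (-1 : R) ^ (i - 1) * x ^ (i / 2))) := by

  have hn1 : 1 ≤ n := by omega
  have hn0 : 0 < n := by omega
  have hA : ∀ m : ℕ, (Polynomial.aeval x) (Apoly m)
      = ∏ i ∈ Icc 2 m, (1 + (-1 : R) ^ (i - 1) * x ^ (i / 2)) := by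
    intro m
    unfold Apoly
    rw [map_prod]
    refine Finset.prod_congr rfl fun i _ => ?_
    rw [map_add, map_one, map_mul, map_pow, map_pow, map_neg, map_one, Polynomial.aeval_X]
  constructor
  · have hL : ∑ σ ∈ univ.filter (fun σ : BG n => Even (nnegB σ)),
        (-1 : R) ^ lenD σ * x ^ LD σ
        = (Polynomial.aeval x) (∑ σ ∈ univ.filter (fun σ : BG n => Even (nnegB σ)), Phi σ) := by
      rw [map_sum]
      refine Finset.sum_congr rfl fun σ _ => ?_
      rw [← term_eq_Phi σ]
      rw [map_mul, map_pow, map_pow, map_neg, map_one, Polynomial.aeval_X]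
    rw [hL, seven hn0, map_pow, hA]
  · have hL : ∑ σ : Equiv.Perm (Fin n), (-1 : R) ^ invA σ * x ^ oinvA σ
        = (Polynomial.aeval x) (∑ π : Equiv.Perm (Fin n), Aterm π) := by
      rw [map_sum]
      refine Finset.sum_congr rfl fun π _ => ?_
      unfold Aterm
      rw [map_mul, map_pow, map_pow, map_neg, map_one, Polynomial.aeval_X]
    rw [hL, Asum_eq n hn1, hA]
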